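/- Under the hypotheses of the proportionality theorem (Broyden-class method with exact line search on the quadratic q, PCG iterations well defined, φ_i ≠ φ_i^c, s_iᵀAs_i ≠ 0 and y_iᵀH_iy_i ≠ 0 for i ≤ k, with d_k = γ_k d_k^{PCG}), the singular parameter value admits the closed form φ_k^c = −γ_k · (g_kᵀH₀g_k) / (g_{k+1}ᵀH₀g_{k+1}). -/

import Mathlib

/-!
With exact line search, a Broyden-class direction that is a nonzero multiple `γ_i` of the PCG
direction produces the same step, so both methods generate the same iterates and gradients up to
`g_{k+1}`. The PCG orthogonality relations `g_{k+1} ⬝ d_i = 0` and `g_{k+1} ⬝ H₀ g_i = 0`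
(`i ≤ k`) make every Broyden correction vanish on `g_{k+1}`, hence `H_k g_{k+1} = H₀ g_{k+1}`,
while `H_k g_k = -d_k`. With `s_k = α d_k`, `y_k = g_{k+1} - g_k`, `r_i = g_iᵀH₀g_i` one gets
`y_kᵀs_k = α γ_k r_k`, `y_kᵀH_ky_k = r_{k+1} + γ_k r_k`, `s_kᵀH_k⁻¹s_k = α² γ_k r_k`, and the
closed form follows. `H_k` is invertible since by the matrix determinant lemma a Broyden update
is singular only at `φ = φᶜ`.
-/

open Matrix

variable {K ι : Type*} [Field K] [Fintype ι]

theorem Matrix.IsSymm.dotProduct_mulVec_comm {M : Matrix ι ι K} (hM : M.IsSymm) (u v : ι → K) :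
    u ⬝ᵥ (M *ᵥ v) = v ⬝ᵥ (M *ᵥ u) := by
  rw [dotProduct_mulVec, ← mulVec_transpose, hM.eq, dotProduct_comm]

def exactStepLength (A : Matrix ι ι K) (g d : ι → K) : K :=
  -(g ⬝ᵥ d) / (d ⬝ᵥ (A *ᵥ d))

theorem exactStepLength_smul_smul (A : Matrix ι ι K) (g d : ι → K) {c : K} (hc : c ≠ 0) :
    exactStepLength A g (c • d) • (c • d) = exactStepLength A g d • d := by
  unfold exactStepLength
  rw [smul_smul, mulVec_smul, dotProduct_smul, smul_dotProduct, dotProduct_smul]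
  congr 1
  simp only [smul_eq_mul]
  by_cases hd : d ⬝ᵥ (A *ᵥ d) = 0
  · simp [hd]
  · field_simp

theorem add_exactStepLength_smul_dotProduct (A : Matrix ι ι K) (g d : ι → K)
    (hd : d ⬝ᵥ (A *ᵥ d) ≠ 0) :
    (g + exactStepLength A g d • (A *ᵥ d)) ⬝ᵥ d = 0 := by
  rw [add_dotProduct, smul_dotProduct, dotProduct_comm (A *ᵥ d), exactStepLength, smul_eq_mul,
    div_mul_cancel₀ _ hd, add_neg_cancel]

def broydenDirection (H : Matrix ι ι K) (s y : ι → K) : ι → K :=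
  (1 / (s ⬝ᵥ y)) • s - (1 / (y ⬝ᵥ (H *ᵥ y))) • (H *ᵥ y)

def broydenUpdate (H : Matrix ι ι K) (s y : ι → K) (φ : K) : Matrix ι ι K :=
  H + (1 / (s ⬝ᵥ y)) • vecMulVec s s - (1 / (y ⬝ᵥ (H *ᵥ y))) • vecMulVec (H *ᵥ y) (H *ᵥ y)
    + (φ * (y ⬝ᵥ (H *ᵥ y))) • vecMulVec (broydenDirection H s y) (broydenDirection H s y)

/-- The value `φᶜ` of the paper; see `det_broydenUpdate`. -/
noncomputable def broydenSingularParam [DecidableEq ι] (H : Matrix ι ι K) (s y : ι → K) : K :=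
  (y ⬝ᵥ s) ^ 2 / ((y ⬝ᵥ s) ^ 2 - (y ⬝ᵥ (H *ᵥ y)) * (s ⬝ᵥ (H⁻¹ *ᵥ s)))

theorem Matrix.IsSymm.broydenUpdate {H : Matrix ι ι K} (hH : H.IsSymm) (s y : ι → K) (φ : K) :
    (broydenUpdate H s y φ).IsSymm := by
  have hvv (u : ι → K) : (vecMulVec u u).IsSymm := transpose_vecMulVec u u
  exact ((hH.add ((hvv _).smul _)).sub ((hvv _).smul _)).add ((hvv _).smul _)

theorem broydenUpdate_mulVec_of_dotProduct_eq_zero (H : Matrix ι ι K) {s y w : ι → K} (φ : K)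
    (hs : s ⬝ᵥ w = 0) (hy : (H *ᵥ y) ⬝ᵥ w = 0) :
    broydenUpdate H s y φ *ᵥ w = H *ᵥ w := by
  have hv : broydenDirection H s y ⬝ᵥ w = 0 := by
    simp [broydenDirection, sub_dotProduct, smul_dotProduct, hs, hy]
  simp [broydenUpdate, add_mulVec, sub_mulVec, smul_mulVec, vecMulVec_mulVec, hs, hy, hv]

/-- The update is the rank-two correction `Wᵀ C W` with `W` the matrix of rows `s, H y`, so the
matrix determinant lemma reduces its determinant to a `2 × 2` one. -/
theorem det_broydenUpdate [DecidableEq ι] {H : Matrix ι ι K} (hH : H.IsSymm) (hHu : IsUnit H.det)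
    (s y : ι → K) (φ : K) (hσ : s ⬝ᵥ y ≠ 0) (hω : y ⬝ᵥ (H *ᵥ y) ≠ 0) :
    (broydenUpdate H s y φ).det = H.det *
      (((s ⬝ᵥ y) ^ 2 - φ * ((s ⬝ᵥ y) ^ 2 - (y ⬝ᵥ (H *ᵥ y)) * (s ⬝ᵥ (H⁻¹ *ᵥ s)))) /
        ((s ⬝ᵥ y) * (y ⬝ᵥ (H *ᵥ y)))) := by
  set σ := s ⬝ᵥ y
  set ω := y ⬝ᵥ (H *ᵥ y)
  set p := s ⬝ᵥ (H⁻¹ *ᵥ s)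
  set W : Matrix (Fin 2) ι K := of ![s, H *ᵥ y]
  set C : Matrix (Fin 2) (Fin 2) K :=
    !![1 / σ + φ * ω * (1 / σ) ^ 2, -(φ * ω * (1 / σ) * (1 / ω));
      -(φ * ω * (1 / σ) * (1 / ω)), -(1 / ω) + φ * ω * (1 / ω) ^ 2]
  have hsplit : broydenUpdate H s y φ = H + Wᵀ * C * W := by
    ext i j
    simp only [broydenUpdate, broydenDirection, W, C, Matrix.add_apply, Matrix.sub_apply,
      Matrix.smul_apply, vecMulVec_apply, Pi.sub_apply, Pi.smul_apply, smul_eq_mul,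
      Matrix.mul_apply, Fin.sum_univ_two, transpose_apply, of_apply, cons_val', cons_val_fin_one,
      cons_val_zero, cons_val_one]
    ring
  have hy : H⁻¹ *ᵥ (H *ᵥ y) = y := by rw [mulVec_mulVec, nonsing_inv_mul _ hHu, one_mulVec]
  have hgram : W * H⁻¹ * Wᵀ = !![p, σ; σ, ω] := by
    ext i j
    rw [mul_apply', mul_apply_eq_vecMul, ← dotProduct_mulVec]
    fin_cases i <;> fin_cases j
    · rfl
    · exact congrArg (s ⬝ᵥ ·) hy
    · exact ((hH.inv).dotProduct_mulVec_comm _ _).trans (congrArg (s ⬝ᵥ ·) hy)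
    · exact (congrArg ((H *ᵥ y) ⬝ᵥ ·) hy).trans (dotProduct_comm _ _)
  rw [hsplit, det_add_mul _ _ hHu, ← Matrix.mul_assoc, hgram, det_fin_two]
  congr 1
  simp only [C, one_fin_two, Matrix.add_apply, Matrix.mul_apply, Fin.sum_univ_two, of_apply,
    cons_val', cons_val_zero, cons_val_one, cons_val_fin_one]
  field_simp
  ring

theorem isUnit_det_broydenUpdate [DecidableEq ι] {H : Matrix ι ι K} (hH : H.IsSymm)
    (hHu : IsUnit H.det) {s y : ι → K} {φ : K} (hσ : s ⬝ᵥ y ≠ 0) (hω : y ⬝ᵥ (H *ᵥ y) ≠ 0)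
    (hφ : φ ≠ broydenSingularParam H s y) : IsUnit (broydenUpdate H s y φ).det := by
  rw [broydenSingularParam, dotProduct_comm y s] at hφ
  rw [det_broydenUpdate hH hHu s y φ hσ hω, isUnit_iff_ne_zero]
  refine mul_ne_zero hHu.ne_zero (div_ne_zero (fun h0 => ?_) (mul_ne_zero hσ hω))
  by_cases hz : (s ⬝ᵥ y) ^ 2 - (y ⬝ᵥ (H *ᵥ y)) * (s ⬝ᵥ (H⁻¹ *ᵥ s)) = 0
  · rw [hz, mul_zero, sub_zero] at h0
    exact hσ (pow_eq_zero_iff two_ne_zero |>.mp h0)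
  · exact hφ ((eq_div_iff hz).mpr (by linear_combination -h0))

theorem broydenSingularParam_smul_sub [DecidableEq ι] {H : Matrix ι ι K} (hHu : IsUnit H.det)
    {g g' d : ι → K} {a : K} (hHg : H *ᵥ g = -d) (hg'd : g' ⬝ᵥ d = 0)
    (hgHg' : g ⬝ᵥ (H *ᵥ g') = 0) (ha : a ≠ 0) (hgd : g ⬝ᵥ d ≠ 0) :
    broydenSingularParam H (a • d) (g' - g) = (g ⬝ᵥ d) / (g' ⬝ᵥ (H *ᵥ g')) := by
  have hinv : H⁻¹ *ᵥ d = -g := by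
    rw [← neg_neg d, ← hHg, mulVec_neg, mulVec_mulVec, nonsing_inv_mul _ hHu, one_mulVec]
  have hσ : (g' - g) ⬝ᵥ (a • d) = -(a * (g ⬝ᵥ d)) := by
    simp [sub_dotProduct, hg'd]
  have hω : (g' - g) ⬝ᵥ (H *ᵥ (g' - g)) = g' ⬝ᵥ (H *ᵥ g') - g ⬝ᵥ d := by
    simp [mulVec_sub, hHg, sub_dotProduct, hg'd, hgHg', ← sub_eq_add_neg]
  have hp : (a • d) ⬝ᵥ (H⁻¹ *ᵥ (a • d)) = -(a ^ 2 * (g ⬝ᵥ d)) := by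
    simp [mulVec_smul, hinv, dotProduct_comm d g, pow_two, mul_assoc]
  have hden : (-(a * (g ⬝ᵥ d))) ^ 2 - (g' ⬝ᵥ (H *ᵥ g') - g ⬝ᵥ d) * -(a ^ 2 * (g ⬝ᵥ d)) =
      (a ^ 2 * (g ⬝ᵥ d)) * (g' ⬝ᵥ (H *ᵥ g')) := by ring
  rw [broydenSingularParam, hσ, hω, hp, hden, neg_sq, mul_pow, sq (g ⬝ᵥ d), ← mul_assoc,
    mul_div_mul_left _ _ (mul_ne_zero (pow_ne_zero 2 ha) hgd)]

structure IsPCGSequence (A H₀ : Matrix ι ι K) (g d : ℕ → ι → K) : Prop where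
  grad_succ : ∀ i, g (i + 1) = g i + exactStepLength A (g i) (d i) • (A *ᵥ d i)
  dir_zero : d 0 = -(H₀ *ᵥ g 0)
  dir_succ : ∀ i, d (i + 1) = -(H₀ *ᵥ g (i + 1)) +
    ((g (i + 1) ⬝ᵥ (H₀ *ᵥ g (i + 1))) / (g i ⬝ᵥ (H₀ *ᵥ g i))) • d i

namespace IsPCGSequence

variable {A H₀ : Matrix ι ι K} {g d : ℕ → ι → K}

theorem of_iterates {x : ℕ → ι → K} {b : ι → K} (hg : ∀ i, g i = A *ᵥ x i - b)
    (hx : ∀ i, x (i + 1) = x i + exactStepLength A (g i) (d i) • d i)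
    (h0 : d 0 = -(H₀ *ᵥ g 0))
    (hd : ∀ i, d (i + 1) = -(H₀ *ᵥ g (i + 1)) +
      ((g (i + 1) ⬝ᵥ (H₀ *ᵥ g (i + 1))) / (g i ⬝ᵥ (H₀ *ᵥ g i))) • d i) :
    IsPCGSequence A H₀ g d :=
  ⟨fun i => by rw [hg, hx, mulVec_add, mulVec_smul, add_sub_right_comm, ← hg], h0, hd⟩

theorem dotProduct_precond_grad_eq_zero (h : IsPCGSequence A H₀ g d) {v : ι → K} {m : ℕ}
    (hv : ∀ i ≤ m, v ⬝ᵥ d i = 0) : v ⬝ᵥ (H₀ *ᵥ g m) = 0 := by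
  cases m with
  | zero => rw [← neg_neg (H₀ *ᵥ g 0), ← h.dir_zero, dotProduct_neg, hv 0 le_rfl, neg_zero]
  | succ m =>
    have hHg : H₀ *ᵥ g (m + 1) =
        ((g (m + 1) ⬝ᵥ (H₀ *ᵥ g (m + 1))) / (g m ⬝ᵥ (H₀ *ᵥ g m))) • d m - d (m + 1) := by
      rw [h.dir_succ]; abel
    rw [hHg, dotProduct_sub, dotProduct_smul, hv m (by omega), hv (m + 1) le_rfl, smul_zero,
      sub_zero]

theorem grad_dotProduct_dir_self (h : IsPCGSequence A H₀ g d) {j : ℕ}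
    (horth : ∀ i < j, g j ⬝ᵥ d i = 0) : g j ⬝ᵥ d j = -(g j ⬝ᵥ (H₀ *ᵥ g j)) := by
  cases j with
  | zero => rw [h.dir_zero, dotProduct_neg]
  | succ j =>
    rw [h.dir_succ, dotProduct_add, dotProduct_smul, horth j j.lt_succ_self, smul_zero, add_zero,
      dotProduct_neg]

theorem grad_succ_dotProduct_dir (h : IsPCGSequence A H₀ g d) (hA : A.IsSymm) {m : ℕ}
    (hτ : d m ⬝ᵥ (A *ᵥ d m) ≠ 0) (horth : ∀ i < m, g m ⬝ᵥ d i = 0)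
    (hconj : ∀ i < m, d m ⬝ᵥ (A *ᵥ d i) = 0) : ∀ i ≤ m, g (m + 1) ⬝ᵥ d i = 0 := by
  intro i hi
  rw [h.grad_succ]
  rcases hi.lt_or_eq with hi | rfl
  · rw [add_dotProduct, smul_dotProduct, horth i hi, dotProduct_comm, hA.dotProduct_mulVec_comm,
      hconj i hi, smul_zero, add_zero]
  · exact add_exactStepLength_smul_dotProduct A _ _ hτ

theorem dir_succ_dotProduct_mulVec_dir (h : IsPCGSequence A H₀ g d) (hH₀ : H₀.IsSymm) {m : ℕ}
    (hr : ∀ i ≤ m, g i ⬝ᵥ (H₀ *ᵥ g i) ≠ 0) (hτ : ∀ i ≤ m, d i ⬝ᵥ (A *ᵥ d i) ≠ 0)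
    (hgd : ∀ i ≤ m, g i ⬝ᵥ d i = -(g i ⬝ᵥ (H₀ *ᵥ g i)))
    (hprec : ∀ i ≤ m, g (m + 1) ⬝ᵥ (H₀ *ᵥ g i) = 0)
    (hconj : ∀ i < m, d m ⬝ᵥ (A *ᵥ d i) = 0) : ∀ i ≤ m, d (m + 1) ⬝ᵥ (A *ᵥ d i) = 0 := by
  intro i hi
  have hAd : A *ᵥ d i = ((d i ⬝ᵥ (A *ᵥ d i)) / (g i ⬝ᵥ (H₀ *ᵥ g i))) • (g (i + 1) - g i) := by
    rw [h.grad_succ, add_sub_cancel_left, smul_smul, exactStepLength, hgd i hi, neg_neg,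
      div_mul_div_cancel₀ (hr i hi), div_self (hτ i hi), one_smul]
  have hswap (l : ℕ) : (H₀ *ᵥ g (m + 1)) ⬝ᵥ g l = g (m + 1) ⬝ᵥ (H₀ *ᵥ g l) := by
    rw [dotProduct_comm, hH₀.dotProduct_mulVec_comm]
  have hprec_Ad : (H₀ *ᵥ g (m + 1)) ⬝ᵥ (A *ᵥ d i) =
      (d i ⬝ᵥ (A *ᵥ d i)) / (g i ⬝ᵥ (H₀ *ᵥ g i)) * (g (m + 1) ⬝ᵥ (H₀ *ᵥ g (i + 1))) := by
    conv_lhs => rw [hAd]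
    rw [dotProduct_smul, dotProduct_sub, hswap, hswap, hprec i hi, sub_zero, smul_eq_mul]
  rw [h.dir_succ, add_dotProduct, neg_dotProduct, smul_dotProduct, hprec_Ad, smul_eq_mul]
  rcases hi.lt_or_eq with hi | rfl
  · rw [hprec (i + 1) hi, hconj i hi]
    simp
  · field_simp [hr i le_rfl]
    ring

theorem orthogonal_and_conjugate (h : IsPCGSequence A H₀ g d) (hA : A.IsSymm)
    (hH₀ : H₀.IsSymm) {k : ℕ}
    (hr : ∀ i ≤ k, g i ⬝ᵥ (H₀ *ᵥ g i) ≠ 0) (hτ : ∀ i ≤ k, d i ⬝ᵥ (A *ᵥ d i) ≠ 0) :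
    ∀ j ≤ k + 1, (∀ i < j, g j ⬝ᵥ d i = 0 ∧ g j ⬝ᵥ (H₀ *ᵥ g i) = 0) ∧
      (j ≤ k → ∀ i < j, d j ⬝ᵥ (A *ᵥ d i) = 0) := by
  intro j
  induction j using Nat.strong_induction_on with
  | _ j ih =>
  intro hj
  cases j with
  | zero => simp
  | succ m =>
    obtain ⟨horth, hconj⟩ := ih m m.lt_succ_self (by omega)
    have hgd : ∀ i ≤ m, g i ⬝ᵥ d i = -(g i ⬝ᵥ (H₀ *ᵥ g i)) := fun i hi =>
      h.grad_dotProduct_dir_self fun l hl => ((ih i (by omega) (by omega)).1 l hl).1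
    have hgrad := h.grad_succ_dotProduct_dir hA (hτ m (by omega)) (fun i hi => (horth i hi).1)
      (hconj (by omega))
    have hprec : ∀ i ≤ m, g (m + 1) ⬝ᵥ (H₀ *ᵥ g i) = 0 := fun i hi =>
      h.dotProduct_precond_grad_eq_zero fun l hl => hgrad l (hl.trans hi)
    refine ⟨fun i hi => ⟨hgrad i (by omega), hprec i (by omega)⟩, fun hmk i hi => ?_⟩
    exact h.dir_succ_dotProduct_mulVec_dir hH₀ (fun l hl => hr l (by omega))
      (fun l hl => hτ l (by omega)) hgd hprec (hconj (by omega)) i (by omega)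

end IsPCGSequence

theorem iterates_eq_of_dir_eq_smul {A : Matrix ι ι K} {b : ι → K} {x x' d d' : ℕ → ι → K}
    {γ : ℕ → K} {k : ℕ} (h0 : x' 0 = x 0)
    (hx : ∀ i, x (i + 1) = x i + exactStepLength A (A *ᵥ x i - b) (d i) • d i)
    (hx' : ∀ i, x' (i + 1) = x' i + exactStepLength A (A *ᵥ x' i - b) (d' i) • d' i)
    (hd : ∀ i ≤ k, d' i = γ i • d i) (hγ : ∀ i ≤ k, γ i ≠ 0) : ∀ i ≤ k + 1, x' i = x i := by
  intro i hi
  induction i with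
  | zero => exact h0
  | succ i ih =>
    rw [hx, hx', ih (by omega), hd i (by omega), exactStepLength_smul_smul _ _ _ (hγ i (by omega))]

section BroydenIterates

variable {H : ℕ → Matrix ι ι K} {s y : ℕ → ι → K} {φ : ℕ → K}

theorem isSymm_broyden_iterate (h0 : (H 0).IsSymm)
    (hH : ∀ i, H (i + 1) = broydenUpdate (H i) (s i) (y i) (φ i)) (i : ℕ) : (H i).IsSymm := by
  induction i with
  | zero => exact h0
  | succ i ih => exact hH i ▸ ih.broydenUpdate _ _ _

theorem isUnit_det_broyden_iterate [DecidableEq ι] (h0 : IsUnit (H 0).det)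
    (hH : ∀ i, H (i + 1) = broydenUpdate (H i) (s i) (y i) (φ i)) (hsymm : ∀ i, (H i).IsSymm)
    {k : ℕ} (hσ : ∀ i < k, s i ⬝ᵥ y i ≠ 0) (hω : ∀ i < k, y i ⬝ᵥ (H i *ᵥ y i) ≠ 0)
    (hφ : ∀ i < k, φ i ≠ broydenSingularParam (H i) (s i) (y i)) : IsUnit (H k).det := by
  induction k with
  | zero => exact h0
  | succ k ih =>
    rw [hH]
    exact isUnit_det_broydenUpdate (hsymm k) (ih (fun i hi => hσ i (by omega))
      (fun i hi => hω i (by omega)) (fun i hi => hφ i (by omega))) (hσ k k.lt_succ_self)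
      (hω k k.lt_succ_self) (hφ k k.lt_succ_self)

theorem broyden_iterate_mulVec_eq (hH : ∀ i, H (i + 1) = broydenUpdate (H i) (s i) (y i) (φ i))
    (hsymm : ∀ i, (H i).IsSymm) {w : ι → K} {m : ℕ} (hs : ∀ i < m, s i ⬝ᵥ w = 0)
    (hy : ∀ i < m, y i ⬝ᵥ (H 0 *ᵥ w) = 0) : ∀ i ≤ m, H i *ᵥ w = H 0 *ᵥ w := by
  intro i hi
  induction i with
  | zero => rfl
  | succ i ih =>
    have hHy : (H i *ᵥ y i) ⬝ᵥ w = 0 := by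
      rw [dotProduct_comm, (hsymm i).dotProduct_mulVec_comm, ih (by omega), hy i (by omega)]
    rw [hH, broydenUpdate_mulVec_of_dotProduct_eq_zero _ _ (hs i (by omega)) hHy, ih (by omega)]

end BroydenIterates

theorem broyden_phi_c_closed_form_general
    (n : ℕ) (A H0 : Matrix (Fin n) (Fin n) ℝ) (b x0 : Fin n → ℝ)
    (hA : A.IsSymm) (hH0 : H0.PosDef)
    (k : ℕ)
    -- PCG sequences
    (xC dC gC : ℕ → Fin n → ℝ)
    (hgC : ∀ i, gC i = A *ᵥ xC i - b)
    (hxC0 : xC 0 = x0)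
    (hdC0 : dC 0 = -(H0 *ᵥ gC 0))
    (hdC : ∀ i, dC (i+1) = -(H0 *ᵥ gC (i+1)) +
      ((gC (i+1) ⬝ᵥ (H0 *ᵥ gC (i+1))) / (gC i ⬝ᵥ (H0 *ᵥ gC i))) • dC i)
    (hxC : ∀ i, xC (i+1) = xC i +
      (-(gC i ⬝ᵥ dC i) / (dC i ⬝ᵥ (A *ᵥ dC i))) • dC i)
    -- PCG iterations 0,…,k are well defined
    (hwf1 : ∀ i, i ≤ k → gC i ⬝ᵥ (H0 *ᵥ gC i) ≠ 0)
    (hwf2 : ∀ i, i ≤ k → dC i ⬝ᵥ (A *ᵥ dC i) ≠ 0)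
    -- Broyden-class method with exact line search
    (φ : ℕ → ℝ)
    (xB dB sB yB gB : ℕ → Fin n → ℝ) (H : ℕ → Matrix (Fin n) (Fin n) ℝ)
    (hgB : ∀ i, gB i = A *ᵥ xB i - b)
    (hxB0 : xB 0 = x0)
    (hH00 : H 0 = H0)
    (hdB : ∀ i, dB i = -(H i *ᵥ gB i))
    (hxB : ∀ i, xB (i+1) = xB i +
      (-(gB i ⬝ᵥ dB i) / (dB i ⬝ᵥ (A *ᵥ dB i))) • dB i)
    (hsB : ∀ i, sB i = xB (i+1) - xB i)
    (hyB : ∀ i, yB i = A *ᵥ sB i)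
    (hH : ∀ i, H (i+1) = H i
      + (1 / (sB i ⬝ᵥ yB i)) • vecMulVec (sB i) (sB i)
      - (1 / (yB i ⬝ᵥ (H i *ᵥ yB i))) • vecMulVec (H i *ᵥ yB i) (H i *ᵥ yB i)
      + (φ i * (yB i ⬝ᵥ (H i *ᵥ yB i))) •
          vecMulVec
            ((1 / (sB i ⬝ᵥ yB i)) • sB i - (1 / (yB i ⬝ᵥ (H i *ᵥ yB i))) • (H i *ᵥ yB i))
            ((1 / (sB i ⬝ᵥ yB i)) • sB i - (1 / (yB i ⬝ᵥ (H i *ᵥ yB i))) • (H i *ᵥ yB i)))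
    -- conditions for i = 0,…,k
    (hphi : ∀ i, i ≤ k → φ i ≠ (yB i ⬝ᵥ sB i) ^ 2 /
      ((yB i ⬝ᵥ sB i) ^ 2 - (yB i ⬝ᵥ (H i *ᵥ yB i)) * (sB i ⬝ᵥ ((H i)⁻¹ *ᵥ sB i))))
    (hcurv : ∀ i, i ≤ k → sB i ⬝ᵥ (A *ᵥ sB i) ≠ 0)
    (hyHy : ∀ i, i ≤ k → yB i ⬝ᵥ (H i *ᵥ yB i) ≠ 0)
    -- proportionality coefficients
    (γ : ℕ → ℝ)
    (hcol : ∀ i, i ≤ k → dB i = γ i • dC i) :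
    -- closed form for φ_k^c
    (yB k ⬝ᵥ sB k) ^ 2 /
      ((yB k ⬝ᵥ sB k) ^ 2 - (yB k ⬝ᵥ (H k *ᵥ yB k)) * (sB k ⬝ᵥ ((H k)⁻¹ *ᵥ sB k))) =
    -(γ k) * (gB k ⬝ᵥ (H0 *ᵥ gB k)) / (gB (k+1) ⬝ᵥ (H0 *ᵥ gB (k+1))) := by
  have hH0s : H0.IsSymm := isHermitian_iff_isSymm.mp hH0.isHermitian
  have hpcg := IsPCGSequence.of_iterates hgC hxC hdC0 hdC
  have hstep (i : ℕ) : sB i = exactStepLength A (gB i) (dB i) • dB i := by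
    rw [hsB, hxB, add_sub_cancel_left]; rfl
  have hyg (i : ℕ) : yB i = gB (i + 1) - gB i := by
    rw [hyB, hsB, hgB, hgB, mulVec_sub, sub_sub_sub_cancel_right]
  have hne (i : ℕ) (hi : i ≤ k) : exactStepLength A (gB i) (dB i) ≠ 0 ∧ γ i ≠ 0 := by
    have hs : sB i ≠ 0 := fun h0 => hcurv i hi (by simp [h0])
    rw [hstep, smul_ne_zero_iff] at hs
    exact ⟨hs.1, fun hγ => hs.2 (by rw [hcol i hi, hγ, zero_smul])⟩
  have hx := iterates_eq_of_dir_eq_smul (hxB0.trans hxC0.symm) (fun i => hgC i ▸ hxC i)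
    (fun i => hgB i ▸ hxB i) hcol (fun i hi => (hne i hi).2)
  have hgBC (i : ℕ) (hi : i ≤ k + 1) : gB i = gC i := by rw [hgB, hgC, hx i hi]
  have hpcg_orth := hpcg.orthogonal_and_conjugate hA hH0s hwf1 hwf2
  have horth (i : ℕ) (hi : i ≤ k) :
      gB (k + 1) ⬝ᵥ dB i = 0 ∧ gB i ⬝ᵥ (H0 *ᵥ gB (k + 1)) = 0 := by
    obtain ⟨hd, hg⟩ := (hpcg_orth (k + 1) le_rfl).1 i (by omega)
    rw [hcol i hi, dotProduct_smul, hH0s.dotProduct_mulVec_comm, hgBC i (by omega),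
      hgBC _ le_rfl, hd, hg, smul_zero]
    exact ⟨rfl, rfl⟩
  have hgd : gB k ⬝ᵥ dB k = -γ k * (gB k ⬝ᵥ (H0 *ᵥ gB k)) := by
    have := hpcg.grad_dotProduct_dir_self fun i hi => ((hpcg_orth k (by omega)).1 i hi).1
    rw [hcol k le_rfl, dotProduct_smul, hgBC k (by omega), this, smul_eq_mul, mul_neg, neg_mul]
  have hsymm := isSymm_broyden_iterate (hH00 ▸ hH0s) hH
  have hunit : IsUnit (H k).det :=
    isUnit_det_broyden_iterate (hH00 ▸ isUnit_iff_ne_zero.mpr hH0.det_pos.ne') hH hsymm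
      (fun i hi => hyB i ▸ hcurv i (by omega)) (fun i hi => hyHy i (by omega))
      (fun i hi => hphi i (by omega))
  have hHg : H k *ᵥ gB (k + 1) = H0 *ᵥ gB (k + 1) := by
    refine hH00 ▸ broyden_iterate_mulVec_eq hH hsymm (fun i hi => ?_) (fun i hi => ?_) k le_rfl
    · rw [hstep, smul_dotProduct, dotProduct_comm, (horth i hi.le).1, smul_zero]
    · rw [hH00, hyg, sub_dotProduct, (horth i hi.le).2, (horth (i + 1) hi).2, sub_zero]
  have hgd_ne : gB k ⬝ᵥ dB k ≠ 0 := by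
    rw [hgd, hgBC k (by omega)]
    exact mul_ne_zero (neg_ne_zero.mpr (hne k le_rfl).2) (hwf1 k le_rfl)
  change broydenSingularParam (H k) (sB k) (yB k) = _
  rw [hyg, hstep, broydenSingularParam_smul_sub hunit (by rw [hdB, neg_neg]) (horth k le_rfl).1
    (hHg ▸ (horth k le_rfl).2) (hne k le_rfl).1 hgd_ne, hgd, hHg]

/-- Under the hypotheses of the proportionality theorem, the singular
value `φ_k^c` of the Broyden parameter admits the closed form
`φ_k^c = -γ_k (g_kᵀH₀g_k)/(g_{k+1}ᵀH₀g_{k+1})`. -/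
theorem broyden_phi_c_closed_form
    (n : ℕ) (A H0 : Matrix (Fin n) (Fin n) ℝ) (b x0 : Fin n → ℝ)
    (hA : A.IsSymm) (hH0 : H0.PosDef)
    (k : ℕ)
    -- PCG sequences
    (xC dC gC : ℕ → Fin n → ℝ)
    (hgC : ∀ i, gC i = A *ᵥ xC i - b)
    (hxC0 : xC 0 = x0)
    (hdC0 : dC 0 = -(H0 *ᵥ gC 0))
    (hdC : ∀ i, dC (i+1) = -(H0 *ᵥ gC (i+1)) +
      ((gC (i+1) ⬝ᵥ (H0 *ᵥ gC (i+1))) / (gC i ⬝ᵥ (H0 *ᵥ gC i))) • dC i)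
    (hxC : ∀ i, xC (i+1) = xC i +
      (-(gC i ⬝ᵥ dC i) / (dC i ⬝ᵥ (A *ᵥ dC i))) • dC i)
    -- PCG iterations 0,…,k are well defined
    (hwf1 : ∀ i, i ≤ k → gC i ⬝ᵥ (H0 *ᵥ gC i) ≠ 0)
    (hwf2 : ∀ i, i ≤ k → dC i ⬝ᵥ (A *ᵥ dC i) ≠ 0)
    -- Broyden-class method with exact line search
    (φ : ℕ → ℝ)
    (xB dB sB yB gB : ℕ → Fin n → ℝ) (H : ℕ → Matrix (Fin n) (Fin n) ℝ)
    (hgB : ∀ i, gB i = A *ᵥ xB i - b)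
    (hxB0 : xB 0 = x0)
    (hH00 : H 0 = H0)
    (hdB : ∀ i, dB i = -(H i *ᵥ gB i))
    (hxB : ∀ i, xB (i+1) = xB i +
      (-(gB i ⬝ᵥ dB i) / (dB i ⬝ᵥ (A *ᵥ dB i))) • dB i)
    (hsB : ∀ i, sB i = xB (i+1) - xB i)
    (hyB : ∀ i, yB i = A *ᵥ sB i)
    (hH : ∀ i, H (i+1) = H i
      + (1 / (sB i ⬝ᵥ yB i)) • vecMulVec (sB i) (sB i)
      - (1 / (yB i ⬝ᵥ (H i *ᵥ yB i))) • vecMulVec (H i *ᵥ yB i) (H i *ᵥ yB i)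
      + (φ i * (yB i ⬝ᵥ (H i *ᵥ yB i))) •
          vecMulVec
            ((1 / (sB i ⬝ᵥ yB i)) • sB i - (1 / (yB i ⬝ᵥ (H i *ᵥ yB i))) • (H i *ᵥ yB i))
            ((1 / (sB i ⬝ᵥ yB i)) • sB i - (1 / (yB i ⬝ᵥ (H i *ᵥ yB i))) • (H i *ᵥ yB i)))
    -- conditions for i = 0,…,k
    (hphi : ∀ i, i ≤ k → φ i ≠ (yB i ⬝ᵥ sB i) ^ 2 /
      ((yB i ⬝ᵥ sB i) ^ 2 - (yB i ⬝ᵥ (H i *ᵥ yB i)) * (sB i ⬝ᵥ ((H i)⁻¹ *ᵥ sB i))))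
    (hcurv : ∀ i, i ≤ k → sB i ⬝ᵥ (A *ᵥ sB i) ≠ 0)
    (hyHy : ∀ i, i ≤ k → yB i ⬝ᵥ (H i *ᵥ yB i) ≠ 0)
    (hg : ∀ i, i ≤ k → gB i ≠ 0)
    -- proportionality coefficients
    (γ : ℕ → ℝ)
    (hcol : ∀ i, i ≤ k → dB i = γ i • dC i) :
    -- closed form for φ_k^c
    (yB k ⬝ᵥ sB k) ^ 2 /
      ((yB k ⬝ᵥ sB k) ^ 2 - (yB k ⬝ᵥ (H k *ᵥ yB k)) * (sB k ⬝ᵥ ((H k)⁻¹ *ᵥ sB k))) =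
    -(γ k) * (gB k ⬝ᵥ (H0 *ᵥ gB k)) / (gB (k+1) ⬝ᵥ (H0 *ᵥ gB (k+1))) :=
  broyden_phi_c_closed_form_general n A H0 b x0 hA hH0 k xC dC gC hgC hxC0 hdC0 hdC hxC hwf1 hwf2 φ
    xB dB sB yB gB H hgB hxB0 hH00 hdB hxB hsB hyB hH hphi hcurv hyHy γ hcol
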